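/- arXiv:0705.3126 — 2 statements merged into one kernel-verified Lean document; each statement's English description precedes it below -/
import Mathlib

section
/- Let φ ∈ C_b^1(H) and define F_ε φ(x) = (φ(η(ε,x)) - φ(x))/ε and Fφ(x) = ⟨Dφ(x), F(x)⟩. Then F_ε φ → Fφ uniformly on H as ε → 0⁺. -/
open scoped RealInnerProductSpace

/-!
By the chain rule, `t ↦ φ (η t x)` has derivative `G (η t x)` with `G = ⟪Dφ, F⟫`, so the finite
difference `F_ε φ (x)` is an average of `G (η s x)` over `s ∈ [0, ε]` (mean value inequality).
The flow has speed at most `‖F‖₀`, so it moves every point by at most `‖F‖₀ ε`; and `G` is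
uniformly continuous, being the pairing of the bounded uniformly continuous `Dφ` with the
bounded Lipschitz `F`. Hence the average is uniformly close to `G x`.
-/

open Set Topology

section

variable {E : Type*} [NormedAddCommGroup E] [NormedSpace ℝ E]

theorem tendstoUniformly_slope_of_tendstoUniformly_deriv {α : Type*} {g g' : ℝ → α → E}
    {l : α → E} (hg : ∀ t ≥ 0, ∀ x, HasDerivAt (g · x) (g' t x) t)
    (hg' : TendstoUniformly g' l (𝓝[≥] 0)) :
    TendstoUniformly (fun ε x => slope (g · x) 0 ε) l (𝓝[>] 0) := by
  rw [Metric.tendstoUniformly_iff] at hg' ⊢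
  intro r hr
  obtain ⟨δ, hδ, hclose⟩ :=
    (nhdsGE_basis_Ico (0 : ℝ)).eventually_iff.1 (hg' (r / 2) (by positivity))
  filter_upwards [Ioo_mem_nhdsGT hδ] with ε ⟨hε, hεδ⟩ x
  -- mean value inequality for `s ↦ g s x - s • l x`, whose derivative stays `r / 2`-close to `0`
  have hmvt : ‖g ε x - g 0 x - ε • l x‖ ≤ r / 2 * ε := by
    have := norm_image_sub_le_of_norm_deriv_le_segment'
      (f := fun s => g s x - s • l x) (C := r / 2)
      (fun s hs => ((hg s hs.1 x).sub ((hasDerivAt_id s).smul_const (l x))).hasDerivWithinAt)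
      (fun s hs => ?_) ε (right_mem_Icc.2 hε.le)
    · rwa [zero_smul, sub_zero, sub_zero, sub_right_comm] at this
    · rw [one_smul, ← dist_eq_norm, dist_comm]
      exact (hclose ⟨hs.1, hs.2.trans hεδ⟩ x).le
  calc dist (l x) (slope (g · x) 0 ε)
      = ‖ε⁻¹ • (g ε x - g 0 x - ε • l x)‖ := by
        rw [dist_eq_norm', slope_def_module, sub_zero, smul_sub ε⁻¹ (g ε x - g 0 x),
          inv_smul_smul₀ hε.ne']
    _ ≤ ε⁻¹ * (r / 2 * ε) := by
        rw [norm_smul_of_nonneg (inv_nonneg.2 hε.le)]; gcongr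
    _ < r := by rw [mul_comm, mul_assoc, mul_inv_cancel₀ hε.ne']; linarith

theorem tendstoUniformly_nhdsGE_zero_of_norm_deriv_le {γ γ' : ℝ → E → E} {M : ℝ}
    (hγ0 : ∀ x, γ 0 x = x) (hγ : ∀ t ≥ 0, ∀ x, HasDerivAt (γ · x) (γ' t x) t)
    (hγ' : ∀ t x, ‖γ' t x‖ ≤ M) :
    TendstoUniformly γ id (𝓝[≥] 0) := by
  have hM : 0 ≤ M := (norm_nonneg _).trans (hγ' 0 0)
  rw [Metric.tendstoUniformly_iff]
  intro r hr
  filter_upwards [Ico_mem_nhdsGE (show (0 : ℝ) < r / (M + 1) by positivity)] with t ⟨ht, htr⟩ x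
  have hmvt := norm_image_sub_le_of_norm_deriv_le_segment' (f := (γ · x)) (C := M)
    (fun s hs => (hγ s hs.1 x).hasDerivWithinAt) (fun s _ => hγ' s x) t (right_mem_Icc.2 ht)
  rw [hγ0, sub_zero] at hmvt
  calc dist (id x) (γ t x) = ‖γ t x - x‖ := dist_eq_norm' _ _
    _ ≤ M * t := hmvt
    _ ≤ M * (r / (M + 1)) := by gcongr
    _ < (M + 1) * (r / (M + 1)) := by gcongr; linarith
    _ = r := mul_div_cancel₀ r (by positivity)

end

theorem UniformContinuous.inner_of_norm_le {α E : Type*} [PseudoMetricSpace α]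
    [NormedAddCommGroup E] [InnerProductSpace ℝ E] {f g : α → E} {Mf Mg : ℝ}
    (hf : UniformContinuous f) (hg : UniformContinuous g)
    (hfM : ∀ x, ‖f x‖ ≤ Mf) (hgM : ∀ x, ‖g x‖ ≤ Mg) :
    UniformContinuous fun x => ⟪f x, g x⟫ := by
  have hsmall : ∀ {r c : ℝ}, 0 < r → 0 ≤ c → r / (2 * (c + 1)) * c < r / 2 := fun hr hc => by
    rw [div_mul_eq_mul_div, div_lt_div_iff₀ (by positivity) two_pos]
    nlinarith
  rw [Metric.uniformContinuous_iff] at hf hg ⊢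
  intro r hr
  obtain ⟨δf, hδf, hf⟩ := hf (r / (2 * (|Mg| + 1))) (by positivity)
  obtain ⟨δg, hδg, hg⟩ := hg (r / (2 * (|Mf| + 1))) (by positivity)
  refine ⟨min δf δg, lt_min hδf hδg, fun {a b} hab => ?_⟩
  have hfab := hf (hab.trans_le (min_le_left _ _))
  have hgab := hg (hab.trans_le (min_le_right _ _))
  rw [dist_eq_norm] at hfab hgab ⊢
  calc ‖⟪f a, g a⟫ - ⟪f b, g b⟫‖ = ‖⟪f a - f b, g a⟫ + ⟪f b, g a - g b⟫‖ := by
        rw [inner_sub_left, inner_sub_right]; ring_nf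
    _ ≤ ‖f a - f b‖ * ‖g a‖ + ‖f b‖ * ‖g a - g b‖ :=
        (norm_add_le _ _).trans (add_le_add (norm_inner_le_norm _ _) (norm_inner_le_norm _ _))
    _ ≤ r / (2 * (|Mg| + 1)) * |Mg| + |Mf| * (r / (2 * (|Mf| + 1))) := by
        gcongr
        · exact (hgM a).trans (le_abs_self _)
        · exact (hfM b).trans (le_abs_self _)
    _ < r / 2 + r / 2 := by
        rw [mul_comm |Mf|]
        exact add_lt_add (hsmall hr (abs_nonneg _)) (hsmall hr (abs_nonneg _))
    _ = r := add_halves r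

theorem lipschitzWith_of_hasFDerivAt_of_norm_le {E F : Type*} [NormedAddCommGroup E]
    [NormedSpace ℝ E] [NormedAddCommGroup F] [NormedSpace ℝ F] {f : E → F} {f' : E → E →L[ℝ] F}
    {C : ℝ} (hf : ∀ x, HasFDerivAt f (f' x) x) (hC : ∀ x, ‖f' x‖ ≤ C) :
    LipschitzWith C.toNNReal f :=
  lipschitzWith_of_nnnorm_fderiv_le (fun x => (hf x).differentiableAt) fun x => by
    rw [(hf x).fderiv, ← NNReal.coe_le_coe, Real.coe_toNNReal', coe_nnnorm]
    exact le_max_of_le_left (hC x)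

theorem finite_difference_uniform_convergence_general
    {H : Type*} [NormedAddCommGroup H] [InnerProductSpace ℝ H] [CompleteSpace H]
    (F : H → H) (MF : ℝ) (hMF : ∀ x, ‖F x‖ ≤ MF)
    (DF : H → H →L[ℝ] H) (hDF : ∀ x, HasFDerivAt F (DF x) x)
    (K : ℝ) (hK : ∀ x, ‖DF x‖ ≤ K)
    (η : ℝ → H → H)
    (hη0 : ∀ x, η 0 x = x)
    (hη : ∀ (t : ℝ) (x : H), HasDerivAt (fun s => η s x) (F (η t x)) t)
    (φ : H → ℝ)
    (Dφ : H → H) (hDφ : ∀ x, HasGradientAt φ (Dφ x) x)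
    (hDφuc : UniformContinuous Dφ) (MDφ : ℝ) (hMDφ : ∀ x, ‖Dφ x‖ ≤ MDφ) :
    TendstoUniformly (fun (ε : ℝ) (x : H) => (φ (η ε x) - φ x) / ε)
      (fun x => ⟪Dφ x, F x⟫) (nhdsWithin 0 (Set.Ioi 0)) := by
  have hchain : ∀ t ≥ (0 : ℝ), ∀ x,
      HasDerivAt (fun s => φ (η s x)) ⟪Dφ (η t x), F (η t x)⟫ t := fun t _ x => by
    have h := (hDφ (η t x)).hasFDerivAt.comp_hasDerivAt t (hη t x)
    simp only [InnerProductSpace.toDual_apply_apply] at h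
    exact h
  have hG : UniformContinuous fun x => ⟪Dφ x, F x⟫ :=
    hDφuc.inner_of_norm_le (lipschitzWith_of_hasFDerivAt_of_norm_le hDF hK).uniformContinuous
      hMDφ hMF
  have hderiv := hG.comp_tendstoUniformly
    (tendstoUniformly_nhdsGE_zero_of_norm_deriv_le hη0 (fun t _ x => hη t x) fun _ _ => hMF _)
  simpa only [slope_def_field, hη0, sub_zero, Function.comp_id] using
    tendstoUniformly_slope_of_tendstoUniformly_deriv hchain hderiv

/-- For `φ ∈ C_b^1(H)`, the finite differences along the flow,
`F_ε φ (x) = (φ (η ε x) - φ x) / ε`, converge uniformly on `H` to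
`F φ (x) = ⟪Dφ x, F x⟫` as `ε → 0⁺`. -/
theorem finite_difference_uniform_convergence
    {H : Type*} [NormedAddCommGroup H] [InnerProductSpace ℝ H] [CompleteSpace H]
    [TopologicalSpace.SeparableSpace H]
    (F : H → H) (MF : ℝ) (hMF : ∀ x, ‖F x‖ ≤ MF)
    (DF : H → H →L[ℝ] H) (hDF : ∀ x, HasFDerivAt F (DF x) x)
    (hDFuc : UniformContinuous DF)
    (K : ℝ) (hK : ∀ x, ‖DF x‖ ≤ K)
    (η : ℝ → H → H)
    (hη0 : ∀ x, η 0 x = x)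
    (hη : ∀ (t : ℝ) (x : H), HasDerivAt (fun s => η s x) (F (η t x)) t)
    (φ : H → ℝ) (Mφ : ℝ) (hMφ : ∀ x, |φ x| ≤ Mφ) (hφuc : UniformContinuous φ)
    (Dφ : H → H) (hDφ : ∀ x, HasGradientAt φ (Dφ x) x)
    (hDφuc : UniformContinuous Dφ) (MDφ : ℝ) (hMDφ : ∀ x, ‖Dφ x‖ ≤ MDφ) :
    TendstoUniformly (fun (ε : ℝ) (x : H) => (φ (η ε x) - φ x) / ε)
      (fun x => ⟪Dφ x, F x⟫) (nhdsWithin 0 (Set.Ioi 0)) :=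
  finite_difference_uniform_convergence_general F MF hMF DF hDF K hK η hη0 hη φ Dφ hDφ hDφuc MDφ
    hMDφ
end

section
/- Under Hypothesis (i)–(iv), for ε ∈ (0,1), λ > ω + (e^{εK}-1)/ε, and f ∈ C_b^1(H), the resolvent φ_ε = R(λ, N_ε) f satisfies the gradient estimate ‖Dφ_ε‖₀ ≤ (λ - ω - (e^{εK}-1)/ε)^{-1} ‖Df‖₀. -/
/-! Write `λ' = λ + 1/ε` and `ψ = f + φ ∘ η_ε / ε`, so that `λ' φ - L φ = ψ`. For `u, v ∈ H` the
function `g t = R_t φ u - R_t φ v` then solves `g' = λ' g - (R_t ψ u - R_t ψ v)` on the right, and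
`R_t` multiplies Lipschitz constants by at most `‖e^{tA}‖ ≤ e^{ωt}`. An integrating factor on
`[0, 1]` bounds `|φ u - φ v|` by `(e^{ω - λ'} [φ] + (1 - e^{ω - λ'}) [ψ] / (λ' - ω)) ‖u - v‖`, where
`[·]` is the best Lipschitz constant; hence `(λ' - ω) [φ] ≤ [ψ]`. Grönwall makes `η_ε`
`e^{εK}`-Lipschitz, so `[ψ] ≤ ‖Df‖₀ + e^{εK} [φ] / ε`, and solving for `[φ] ≥ ‖Dφ‖₀` gives the
estimate. -/

noncomputable section
open MeasureTheory Set Filter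
open scoped Topology RealInnerProductSpace

/-- `C_b(H)`: uniformly continuous and bounded. -/
def IsCb {H : Type*} [NormedAddCommGroup H] [InnerProductSpace ℝ H] (φ : H → ℝ) : Prop :=
  UniformContinuous φ ∧ ∃ C, ∀ x, |φ x| ≤ C

/-- `C_b^1(H)`: in `C_b(H)`, Fréchet differentiable with gradient `Dφ` uniformly
continuous and bounded. -/
def IsCb1 {H : Type*} [NormedAddCommGroup H] [InnerProductSpace ℝ H] [CompleteSpace H]
    (φ : H → ℝ) (Dφ : H → H) : Prop :=
  IsCb φ ∧ (∀ x, HasGradientAt φ (Dφ x) x) ∧ UniformContinuous Dφ ∧ ∃ C, ∀ x, ‖Dφ x‖ ≤ C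

/-- The Ornstein–Uhlenbeck semigroup `R_t φ (x) = ∫_H φ (e^{tA} x + y) N_{Q_t}(dy)`,
with `S t = e^{tA}` and `μ t = N_{Q_t}`. -/
def OUsg {H : Type*} [NormedAddCommGroup H] [InnerProductSpace ℝ H] [MeasurableSpace H]
    (S : ℝ → H →L[ℝ] H) (μ : ℝ → Measure H) (t : ℝ) (φ : H → ℝ) (x : H) : ℝ :=
  ∫ y, φ (S t x + y) ∂ μ t

open Real

section LipSeminorm

variable {α β : Type*} [PseudoMetricSpace α] [PseudoMetricSpace β]

/-- The best Lipschitz constant of `φ` (the junk value `0` if `φ` is not Lipschitz). -/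
def lipSeminorm (φ : α → β) : ℝ :=
  ⨆ p : α × α, dist (φ p.1) (φ p.2) / dist p.1 p.2

lemma lipSeminorm_nonneg (φ : α → β) : 0 ≤ lipSeminorm φ :=
  Real.iSup_nonneg fun _ => div_nonneg dist_nonneg dist_nonneg

lemma dist_le_lipSeminorm_mul {φ : α → β} {C : ℝ} (hφ : ∀ u v, dist (φ u) (φ v) ≤ C * dist u v)
    (u v : α) : dist (φ u) (φ v) ≤ lipSeminorm φ * dist u v := by
  rcases (dist_nonneg : 0 ≤ dist u v).eq_or_lt with huv | huv
  · simpa [← huv] using hφ u v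
  have hbdd : BddAbove (range fun p : α × α => dist (φ p.1) (φ p.2) / dist p.1 p.2) := by
    refine ⟨max C 0, ?_⟩
    rintro _ ⟨⟨u, v⟩, rfl⟩
    exact div_le_of_le_mul₀ dist_nonneg (le_max_right _ _)
      ((hφ u v).trans (mul_le_mul_of_nonneg_right (le_max_left _ _) dist_nonneg))
  exact (div_le_iff₀ huv).1 (le_ciSup hbdd (u, v))

lemma lipSeminorm_le [Nonempty α] {φ : α → β} {C : ℝ} (hC : 0 ≤ C)
    (hφ : ∀ u v, dist (φ u) (φ v) ≤ C * dist u v) : lipSeminorm φ ≤ C :=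
  ciSup_le fun p => div_le_of_le_mul₀ dist_nonneg hC (hφ p.1 p.2)

lemma dist_add_comp_div_le {γ : Type*} [PseudoMetricSpace γ] {f : α → ℝ} {φ : γ → ℝ}
    {g : α → γ} {Cf M Cg c : ℝ} (hc : 0 < c) (hf : ∀ u v, dist (f u) (f v) ≤ Cf * dist u v)
    (hM : 0 ≤ M) (hφ : ∀ u v, dist (φ u) (φ v) ≤ M * dist u v)
    (hg : ∀ u v, dist (g u) (g v) ≤ Cg * dist u v) (u v : α) :
    dist (f u + φ (g u) / c) (f v + φ (g v) / c) ≤ (Cf + M * Cg / c) * dist u v :=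
  calc dist (f u + φ (g u) / c) (f v + φ (g v) / c)
      ≤ dist (f u) (f v) + dist (φ (g u)) (φ (g v)) / c := by
        refine (dist_add_add_le _ _ _ _).trans_eq ?_
        rw [Real.dist_eq (_ / c), ← sub_div, abs_div, abs_of_pos hc, ← Real.dist_eq]
    _ ≤ Cf * dist u v + M * (Cg * dist u v) / c := by
        gcongr
        exacts [hf u v, (hφ _ _).trans (mul_le_mul_of_nonneg_left (hg u v) hM)]
    _ = (Cf + M * Cg / c) * dist u v := by ring

end LipSeminorm

lemma norm_le_lipSeminorm_of_hasGradientAt {H : Type*} [NormedAddCommGroup H]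
    [InnerProductSpace ℝ H] [CompleteSpace H] {φ : H → ℝ} {Dφ : H → H} {x : H} {C : ℝ}
    (hφ : HasGradientAt φ (Dφ x) x) (hC : ∀ u v, dist (φ u) (φ v) ≤ C * dist u v) :
    ‖Dφ x‖ ≤ lipSeminorm φ := by
  have hlip := LipschitzWith.of_dist_le' (dist_le_lipSeminorm_mul hC)
  simpa [Real.coe_toNNReal _ (lipSeminorm_nonneg φ)] using hφ.hasFDerivAt.le_of_lipschitz hlip

lemma dist_le_of_hasGradientAt {H : Type*} [NormedAddCommGroup H] [InnerProductSpace ℝ H]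
    [CompleteSpace H] {g : H → ℝ} {Dg : H → H} {C : ℝ} (hg : ∀ x, HasGradientAt g (Dg x) x)
    (hC : ∀ x, ‖Dg x‖ ≤ C) (u v : H) : dist (g u) (g v) ≤ C * dist u v := by
  simpa [dist_eq_norm] using Convex.norm_image_sub_le_of_norm_hasFDerivWithin_le
    (fun x _ => (hg x).hasFDerivAt.hasFDerivWithinAt) (fun x _ => by simpa using hC x)
    convex_univ (mem_univ v) (mem_univ u)

lemma dist_flow_le {E : Type*} [NormedAddCommGroup E] [NormedSpace ℝ E] {F : E → E}
    {DF : E → E →L[ℝ] E} {K : ℝ} (hF : ∀ x, HasFDerivAt F (DF x) x) (hK : ∀ x, ‖DF x‖ ≤ K)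
    {η : ℝ → E → E} (hη0 : ∀ x, η 0 x = x)
    (hη : ∀ t x, HasDerivAt (fun s => η s x) (F (η t x)) t) {t : ℝ} (ht : 0 ≤ t) (u v : E) :
    dist (η t u) (η t v) ≤ exp (K * t) * dist u v := by
  have hK0 : 0 ≤ K := (norm_nonneg _).trans (hK 0)
  have hFlip : LipschitzWith K.toNNReal F := LipschitzWith.of_dist_le' fun x y => by
    simpa [dist_eq_norm] using Convex.norm_image_sub_le_of_norm_hasFDerivWithin_le
      (fun z _ => (hF z).hasFDerivWithinAt) (fun z _ => hK z) convex_univ (mem_univ y) (mem_univ x)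
  have := dist_le_of_trajectories_ODE (v := fun _ => F) (fun _ => hFlip)
    (fun s _ => (hη s u).continuousAt.continuousWithinAt) (fun s _ => (hη s u).hasDerivWithinAt)
    (fun s _ => (hη s v).continuousAt.continuousWithinAt) (fun s _ => (hη s v).hasDerivWithinAt)
    (by simp only [hη0]; rfl) t ⟨ht, le_rfl⟩
  rwa [Real.coe_toNNReal K hK0, sub_zero, mul_comm] at this

section IsCb

variable {H : Type*} [NormedAddCommGroup H] [InnerProductSpace ℝ H]

lemma IsCb.add {χ₁ χ₂ : H → ℝ} (h₁ : IsCb χ₁) (h₂ : IsCb χ₂) : IsCb (fun z => χ₁ z + χ₂ z) := by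
  obtain ⟨hu₁, C₁, hC₁⟩ := h₁
  obtain ⟨hu₂, C₂, hC₂⟩ := h₂
  exact ⟨hu₁.add hu₂, C₁ + C₂, fun z => (abs_add_le _ _).trans (add_le_add (hC₁ z) (hC₂ z))⟩

lemma IsCb.div_const {χ : H → ℝ} (hχ : IsCb χ) (c : ℝ) : IsCb (fun z => χ z / c) := by
  obtain ⟨hu, C, hC⟩ := hχ
  refine ⟨hu.div_const' c, C / |c|, fun z => ?_⟩
  rw [abs_div]
  exact div_le_div_of_nonneg_right (hC z) (abs_nonneg c)

lemma IsCb.comp_uniformContinuous {χ : H → ℝ} (hχ : IsCb χ) {g : H → H}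
    (hg : UniformContinuous g) : IsCb (χ ∘ g) :=
  ⟨hχ.1.comp hg, hχ.2.imp fun _ hC z => hC (g z)⟩

end IsCb

section OrnsteinUhlenbeck

variable {H : Type*} [NormedAddCommGroup H] [InnerProductSpace ℝ H] [MeasurableSpace H]
  {S : ℝ → H →L[ℝ] H} {μ : ℝ → Measure H}

lemma abs_OUsg_le {t : ℝ} [IsProbabilityMeasure (μ t)] {χ : H → ℝ} {C : ℝ}
    (hC : ∀ z, |χ z| ≤ C) (x : H) : |OUsg S μ t χ x| ≤ C := by
  simpa [OUsg] using norm_integral_le_of_norm_le_const (μ := μ t)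
    (.of_forall fun y => (Real.norm_eq_abs _).trans_le (hC (S t x + y)))

variable [BorelSpace H]

lemma IsCb.integrable_comp_add {χ : H → ℝ} (hχ : IsCb χ) (ν : Measure H) [IsFiniteMeasure ν]
    (w : H) : Integrable (fun y => χ (w + y)) ν := by
  obtain ⟨hχu, C, hC⟩ := hχ
  exact ⟨(hχu.continuous.comp (continuous_const.add continuous_id)).aestronglyMeasurable,
    HasFiniteIntegral.of_bounded (C := C) (.of_forall fun y => hC (w + y))⟩

lemma OUsg_sub_OUsg {t : ℝ} [IsProbabilityMeasure (μ t)] {χ : H → ℝ} (hχ : IsCb χ) (u v : H) :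
    OUsg S μ t χ u - OUsg S μ t χ v = ∫ y, (χ (S t u + y) - χ (S t v + y)) ∂μ t :=
  (integral_sub (hχ.integrable_comp_add _ _) (hχ.integrable_comp_add _ _)).symm

lemma dist_OUsg_le_of_forall {t : ℝ} [IsProbabilityMeasure (μ t)] {χ : H → ℝ} (hχ : IsCb χ)
    {u v : H} {C : ℝ} (hC : ∀ y, dist (χ (S t u + y)) (χ (S t v + y)) ≤ C) :
    dist (OUsg S μ t χ u) (OUsg S μ t χ v) ≤ C := by
  rw [Real.dist_eq, OUsg_sub_OUsg hχ, ← Real.norm_eq_abs]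
  simpa using norm_integral_le_of_norm_le_const (μ := μ t)
    (f := fun y => χ (S t u + y) - χ (S t v + y))
    (.of_forall fun y => by simpa [Real.dist_eq] using hC y)

lemma IsCb.OUsg {χ : H → ℝ} (hχ : IsCb χ) (t : ℝ) [IsProbabilityMeasure (μ t)] :
    IsCb (OUsg S μ t χ) := by
  refine ⟨Metric.uniformContinuous_iff.2 fun e he => ?_, hχ.2.imp fun _ hC => abs_OUsg_le hC⟩
  obtain ⟨δ, hδ, hχδ⟩ := Metric.uniformContinuous_iff.1 hχ.1 (e / 2) (half_pos he)
  obtain ⟨δ', hδ', hSδ⟩ := Metric.uniformContinuous_iff.1 (S t).uniformContinuous δ hδ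
  refine ⟨δ', hδ', fun {u v} huv => (dist_OUsg_le_of_forall hχ fun y => (hχδ ?_).le).trans_lt
    (half_lt_self he)⟩
  rw [dist_add_right]
  exact hSδ huv

lemma dist_OUsg_le {t : ℝ} [IsProbabilityMeasure (μ t)] {χ : H → ℝ} (hχ : IsCb χ) {C : ℝ}
    (hC : 0 ≤ C) (hχC : ∀ p q, dist (χ p) (χ q) ≤ C * dist p q) (u v : H) :
    dist (OUsg S μ t χ u) (OUsg S μ t χ v) ≤ C * ‖S t‖ * dist u v := by
  refine dist_OUsg_le_of_forall hχ fun y => ?_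
  calc dist (χ (S t u + y)) (χ (S t v + y)) ≤ C * dist (S t u) (S t v) := by
        simpa only [dist_add_right] using hχC (S t u + y) (S t v + y)
    _ ≤ C * (‖S t‖ * dist u v) := by
        gcongr
        simpa only [dist_eq_norm, ← map_sub] using (S t).le_opNorm (u - v)
    _ = C * ‖S t‖ * dist u v := (mul_assoc _ _ _).symm

lemma OUsg_zero (hS0 : S 0 = ContinuousLinearMap.id ℝ H) (hμ0 : μ 0 = Measure.dirac 0)
    {χ : H → ℝ} (hχ : Continuous χ) (x : H) : OUsg S μ 0 χ x = χ x := by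
  rw [OUsg, hμ0, hS0, integral_dirac' _ _
    (show Continuous fun y => χ (ContinuousLinearMap.id ℝ H x + y) by fun_prop).stronglyMeasurable]
  simp

lemma OUsg_const_mul_sub {t : ℝ} [IsProbabilityMeasure (μ t)] {χ₁ χ₂ : H → ℝ} (h₁ : IsCb χ₁)
    (h₂ : IsCb χ₂) (c : ℝ) (x : H) :
    OUsg S μ t (fun z => c * χ₁ z - χ₂ z) x = c * OUsg S μ t χ₁ x - OUsg S μ t χ₂ x := by
  rw [OUsg, integral_sub ((h₁.integrable_comp_add _ _).const_mul c) (h₂.integrable_comp_add _ _),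
    integral_const_mul]
  rfl

lemma slope_OUsg_eq_integral (hμ : ∀ t, IsProbabilityMeasure (μ t)) {φ : H → ℝ} (hφ : IsCb φ)
    {t s : ℝ} {x : H}
    (hsem : OUsg S μ (t + s) φ x = OUsg S μ t (OUsg S μ s φ) x) :
    (OUsg S μ (t + s) φ x - OUsg S μ t φ x) / s
      = ∫ y, (OUsg S μ s φ (S t x + y) - φ (S t x + y)) / s ∂μ t := by
  have := hμ t
  have := hμ s
  rw [hsem, integral_div, OUsg, OUsg,
    ← integral_sub ((hφ.OUsg s).integrable_comp_add _ _) (hφ.integrable_comp_add _ _)]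

lemma hasDerivWithinAt_OUsg (hμ : ∀ t, IsProbabilityMeasure (μ t)) {φ g : H → ℝ} (hφ : IsCb φ)
    {t : ℝ} {x : H} (hsem : ∀ s, 0 ≤ s → OUsg S μ (t + s) φ x = OUsg S μ t (OUsg S μ s φ) x)
    (hbdd : ∃ C, ∀ s ∈ Ioo (0 : ℝ) 1, ∀ z, |(OUsg S μ s φ z - φ z) / s| ≤ C)
    (hg : ∀ z, Tendsto (fun s => (OUsg S μ s φ z - φ z) / s) (𝓝[>] 0) (𝓝 (g z))) :
    HasDerivWithinAt (fun r => OUsg S μ r φ x) (OUsg S μ t g x) (Ici t) t := by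
  obtain ⟨C, hC⟩ := hbdd
  have hlim : Tendsto (fun s => ∫ y, (OUsg S μ s φ (S t x + y) - φ (S t x + y)) / s ∂μ t)
      (𝓝[>] 0) (𝓝 (OUsg S μ t g x)) := by
    refine tendsto_integral_filter_of_dominated_convergence (fun _ => C)
      (.of_forall fun s => ?_) ?_ (integrable_const C) (.of_forall fun y => hg _)
    · exact ((((hφ.OUsg s).1.continuous.sub hφ.1.continuous).comp
        (continuous_const_add _)).div_const s).aestronglyMeasurable
    · filter_upwards [Ioo_mem_nhdsGT zero_lt_one] with s hs
      exact .of_forall fun y => (Real.norm_eq_abs _).trans_le (hC s hs _)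
  have hshift : Tendsto (fun r => r - t) (𝓝[>] t) (𝓝[>] 0) := by
    have := (map_subRight_nhdsGT (c := t) (a := t)).le
    rwa [sub_self] at this
  rw [hasDerivWithinAt_iff_tendsto_slope, Ici_sdiff_left]
  refine (hlim.comp hshift).congr' ?_
  filter_upwards [self_mem_nhdsWithin] with r (hr : t < r)
  have hr' := add_sub_cancel t r
  rw [Function.comp_apply, ← slope_OUsg_eq_integral hμ hφ (hsem _ (sub_pos.2 hr).le), hr',
    slope_def_field]

end OrnsteinUhlenbeck

/-- Integrate `(e^{-lam t} g)' = -e^{-lam t} h` over `[0, T]`. -/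
lemma le_exp_neg_mul_add_of_hasDerivWithinAt {g h : ℝ → ℝ} {lam ω B T : ℝ} (hωlam : ω ≠ lam)
    (hT : 0 ≤ T) (hg : ContinuousOn g (Icc 0 T))
    (hg' : ∀ t ∈ Ico 0 T, HasDerivWithinAt g (lam * g t - h t) (Ici t) t)
    (hh : ∀ t ∈ Ico 0 T, h t ≤ B * exp (ω * t)) :
    g 0 ≤ exp (-lam * T) * g T + B * (1 - exp ((ω - lam) * T)) / (lam - ω) := by
  have hne : lam - ω ≠ 0 := sub_ne_zero.2 hωlam.symm
  have hexp : ∀ c t : ℝ, HasDerivAt (fun r => exp (c * r)) (c * exp (c * t)) t := fun c t => by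
    simpa [mul_comm] using ((hasDerivAt_id t).const_mul c).exp
  have hcomp := image_le_of_deriv_right_le_deriv_boundary
    (f := fun t => -(exp (-lam * t) * g t)) (f' := fun t => exp (-lam * t) * h t)
    (B := fun t => -g 0 + B * (1 - exp ((ω - lam) * t)) / (lam - ω))
    (B' := fun t => B * exp ((ω - lam) * t))
    ((continuous_exp.comp (continuous_const_mul _)).continuousOn.mul hg).neg
    (fun t ht => (((hexp (-lam) t).hasDerivWithinAt.mul (hg' t ht)).neg).congr_deriv (by ring))
    (by simp) (by fun_prop)
    (fun t _ => ((((hexp (ω - lam) t).const_sub 1).const_mul B).div_const (lam - ω)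
      |>.const_add (-g 0) |>.hasDerivWithinAt).congr_deriv (by field_simp; ring))
    (fun t ht => by
      calc exp (-lam * t) * h t ≤ exp (-lam * t) * (B * exp (ω * t)) := by gcongr; exact hh t ht
        _ = B * exp ((ω - lam) * t) := by rw [mul_left_comm, ← exp_add]; ring_nf)
    (right_mem_Icc.2 hT)
  linarith

section Resolvent
variable {H : Type*} [NormedAddCommGroup H] [InnerProductSpace ℝ H] [MeasurableSpace H]
  [BorelSpace H] {S : ℝ → H →L[ℝ] H} {μ : ℝ → Measure H} {ω lam : ℝ} {φ ψ : H → ℝ}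

lemma sub_le_of_hasDerivWithinAt_OUsg (hμ : ∀ t, IsProbabilityMeasure (μ t))
    (hSbound : ∀ t ≥ (0 : ℝ), ‖S t‖ ≤ exp (ω * t)) (hωlam : ω ≠ lam) (hψ : IsCb ψ)
    (h0 : ∀ x, OUsg S μ 0 φ x = φ x) (hcont : ∀ x, ContinuousOn (fun t => OUsg S μ t φ x) (Icc 0 1))
    (hder : ∀ t ∈ Ico (0 : ℝ) 1, ∀ x, HasDerivWithinAt (fun r => OUsg S μ r φ x)
      (lam * OUsg S μ t φ x - OUsg S μ t ψ x) (Ici t) t)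
    (hφ : IsCb φ) {M : ℝ} (hM : 0 ≤ M) (hφM : ∀ u v, dist (φ u) (φ v) ≤ M * dist u v)
    {Lψ : ℝ} (hLψ : 0 ≤ Lψ) (hψL : ∀ u v, dist (ψ u) (ψ v) ≤ Lψ * dist u v) (u v : H) :
    φ u - φ v ≤ (M * exp (ω - lam) + Lψ * (1 - exp (ω - lam)) / (lam - ω)) * dist u v := by
  have hOU_le : ∀ {χ : H → ℝ} {C : ℝ}, IsCb χ → 0 ≤ C → (∀ p q, dist (χ p) (χ q) ≤ C * dist p q) →
      ∀ t ≥ (0 : ℝ), OUsg S μ t χ u - OUsg S μ t χ v ≤ C * exp (ω * t) * dist u v := by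
    intro χ C hχ hC hχC t ht
    have := hμ t
    calc OUsg S μ t χ u - OUsg S μ t χ v ≤ dist (OUsg S μ t χ u) (OUsg S μ t χ v) :=
          (le_abs_self _).trans (Real.dist_eq _ _).ge
      _ ≤ C * ‖S t‖ * dist u v := dist_OUsg_le hχ hC hχC u v
      _ ≤ C * exp (ω * t) * dist u v := by gcongr; exact hSbound t ht
  have hcomp := le_exp_neg_mul_add_of_hasDerivWithinAt
    (g := fun t => OUsg S μ t φ u - OUsg S μ t φ v) (h := fun t => OUsg S μ t ψ u - OUsg S μ t ψ v)
    (B := Lψ * dist u v) hωlam zero_le_one ((hcont u).sub (hcont v))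
    (fun t ht => ((hder t ht u).sub (hder t ht v)).congr_deriv (by ring))
    (fun t ht => (hOU_le hψ hLψ hψL t ht.1).trans_eq (by ring))
  have h1 := hOU_le hφ hM hφM 1 zero_le_one
  simp only [h0, mul_one] at hcomp h1
  calc φ u - φ v ≤ exp (-lam) * (M * exp ω * dist u v)
        + Lψ * dist u v * (1 - exp (ω - lam)) / (lam - ω) := by
        refine hcomp.trans ?_
        gcongr
    _ = _ := by rw [sub_eq_neg_add ω, exp_add]; ring

lemma lipSeminorm_mul_sub_le_of_generator (hμ : ∀ t, IsProbabilityMeasure (μ t))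
    (hS0 : S 0 = ContinuousLinearMap.id ℝ H) (hμ0 : μ 0 = Measure.dirac 0)
    (hSbound : ∀ t ≥ (0 : ℝ), ‖S t‖ ≤ exp (ω * t)) (hφ : IsCb φ) (hψ : IsCb ψ)
    (hsem : ∀ s t : ℝ, 0 ≤ s → 0 ≤ t → ∀ x,
      OUsg S μ (s + t) φ x = OUsg S μ s (OUsg S μ t φ) x)
    (hcont : ∀ x, ContinuousOn (fun t => OUsg S μ t φ x) (Ici 0))
    (hbdd : ∃ C, ∀ s ∈ Ioo (0 : ℝ) 1, ∀ z, |(OUsg S μ s φ z - φ z) / s| ≤ C)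
    (hgen : ∀ z, Tendsto (fun s => (OUsg S μ s φ z - φ z) / s) (𝓝[>] 0) (𝓝 (lam * φ z - ψ z)))
    (hωlam : ω < lam) {C : ℝ} (hφC : ∀ u v, dist (φ u) (φ v) ≤ C * dist u v)
    {Lψ : ℝ} (hLψ : 0 ≤ Lψ) (hψL : ∀ u v, dist (ψ u) (ψ v) ≤ Lψ * dist u v) :
    lipSeminorm φ * (lam - ω) ≤ Lψ := by
  set M := lipSeminorm φ
  set β := exp (ω - lam)
  have ha : 0 < lam - ω := sub_pos.2 hωlam
  have hβ : 0 < 1 - β := sub_pos.2 (exp_lt_one_iff.2 (sub_neg.2 hωlam))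
  have hder : ∀ t ∈ Ico (0 : ℝ) 1, ∀ x, HasDerivWithinAt (fun r => OUsg S μ r φ x)
      (lam * OUsg S μ t φ x - OUsg S μ t ψ x) (Ici t) t := fun t ht x => by
    have := hμ t
    rw [← OUsg_const_mul_sub hφ hψ]
    exact hasDerivWithinAt_OUsg hμ hφ (fun s hs => hsem t s ht.1 hs x) hbdd hgen
  have hpair := sub_le_of_hasDerivWithinAt_OUsg hμ hSbound hωlam.ne hψ
    (OUsg_zero hS0 hμ0 hφ.1.continuous) (fun x => (hcont x).mono Icc_subset_Ici_self) hder hφ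
    (lipSeminorm_nonneg φ) (dist_le_lipSeminorm_mul hφC) hLψ hψL
  have hfix : M ≤ M * β + Lψ * (1 - β) / (lam - ω) := by
    refine lipSeminorm_le (by have := lipSeminorm_nonneg φ; positivity) fun u v => ?_
    rw [Real.dist_eq, abs_sub_le_iff]
    exact ⟨hpair u v, dist_comm u v ▸ hpair v u⟩
  have hfix' : M * (lam - ω) * (1 - β) ≤ Lψ * (1 - β) := by
    calc M * (lam - ω) * (1 - β) = M * (1 - β) * (lam - ω) := by ring
      _ ≤ Lψ * (1 - β) / (lam - ω) * (lam - ω) := by gcongr; linarith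
      _ = Lψ * (1 - β) := div_mul_cancel₀ _ ha.ne'
  exact le_of_mul_le_mul_right hfix' hβ

end Resolvent

theorem resolvent_gradient_estimate_general
    {H : Type*} [NormedAddCommGroup H] [InnerProductSpace ℝ H] [CompleteSpace H]
    [MeasurableSpace H] [BorelSpace H]
    -- Hypothesis (i): `S t = e^{tA}` a semigroup of type 𝒢(1, ω)
    (S : ℝ → H →L[ℝ] H) (ω : ℝ)
    (hS0 : S 0 = ContinuousLinearMap.id ℝ H)
    (hSbound : ∀ t ≥ (0:ℝ), ‖S t‖ ≤ Real.exp (ω * t))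
    -- Hypotheses (ii),(iii): `μ t = N_{Q_t}` Gaussian measures giving an OU semigroup
    (μ : ℝ → Measure H) (hμ : ∀ t, IsProbabilityMeasure (μ t))
    (hμ0 : μ 0 = Measure.dirac 0)
    (hsem : ∀ s t : ℝ, 0 ≤ s → 0 ≤ t → ∀ φ : H → ℝ, IsCb φ → ∀ x,
      OUsg S μ (s + t) φ x = OUsg S μ s (fun z => OUsg S μ t φ z) x)
    (hcont : ∀ φ : H → ℝ, IsCb φ → ∀ x, ContinuousOn (fun t => OUsg S μ t φ x) (Ici 0))
    -- `(L, D(L))`: the weak (π-semigroup) generator of the OU semigroup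
    (DL : Set (H → ℝ)) (L : (H → ℝ) → H → ℝ)
    (hDL : ∀ φ, φ ∈ DL ↔ (IsCb φ ∧ ∃ g, IsCb g ∧
      (∀ x, Tendsto (fun t => (OUsg S μ t φ x - φ x) / t) (𝓝[>] 0) (𝓝 (g x))) ∧
      ∃ M, ∀ t ∈ Ioo (0:ℝ) 1, ∀ x, |(OUsg S μ t φ x - φ x) / t| ≤ M))
    (hLdef : ∀ φ ∈ DL, ∀ x,
      Tendsto (fun t => (OUsg S μ t φ x - φ x) / t) (𝓝[>] 0) (𝓝 (L φ x)))
    -- Hypothesis (iv): `F ∈ C_b^1(H;H)` with `K = sup ‖DF‖`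
    (F : H → H)
    (DF : H → H →L[ℝ] H) (hDF : ∀ x, HasFDerivAt F (DF x) x)
    (K : ℝ) (hK : ∀ x, ‖DF x‖ ≤ K)
    -- `η`: the flow of `η' = F ∘ η`
    (η : ℝ → H → H) (hη0 : ∀ x, η 0 x = x)
    (hη : ∀ (t : ℝ) (x : H), HasDerivAt (fun s => η s x) (F (η t x)) t)
    (ε : ℝ) (hε : ε ∈ Ioo (0:ℝ) 1)
    (lam : ℝ) (hlam : lam > ω + (Real.exp (ε * K) - 1) / ε)
    (f : H → ℝ) (Df : H → H) (hf : IsCb1 f Df)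
    (φ : H → ℝ) (Dφ : H → H) (hφDL : φ ∈ DL) (hφ : IsCb1 φ Dφ)
    (hres : ∀ x, lam * φ x - L φ x - (φ (η ε x) - φ x) / ε = f x) :
    ∀ Cf : ℝ, (∀ x, ‖Df x‖ ≤ Cf) →
      ∀ x, ‖Dφ x‖ ≤ (lam - ω - (Real.exp (ε * K) - 1) / ε)⁻¹ * Cf := by
  intro Cf hCf x
  obtain ⟨hfCb, hfgrad, -, -⟩ := hf
  obtain ⟨hφCb, hφgrad, -, Cφ, hCφ⟩ := hφ
  obtain ⟨-, -, -, -, hbdd⟩ := (hDL φ).1 hφDL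
  have hε0 := hε.1
  have hexp : 1 ≤ exp (ε * K) := one_le_exp (mul_nonneg hε0.le ((norm_nonneg _).trans (hK 0)))
  have hφC := dist_le_of_hasGradientAt hφgrad hCφ
  have hηC : ∀ u v, dist (η ε u) (η ε v) ≤ exp (ε * K) * dist u v := by
    simpa only [mul_comm K] using dist_flow_le hDF hK hη0 hη hε0.le
  set M := lipSeminorm φ
  set ψ := fun z => f z + φ (η ε z) / ε
  have hψ : IsCb ψ := hfCb.add ((hφCb.comp_uniformContinuous
    (LipschitzWith.of_dist_le' hηC).uniformContinuous).div_const ε)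
  have hgen : ∀ z, Tendsto (fun s => (OUsg S μ s φ z - φ z) / s) (𝓝[>] 0)
      (𝓝 ((lam + 1 / ε) * φ z - ψ z)) := fun z => by
    convert hLdef φ hφDL z using 2
    have := hres z
    simp only [ψ]
    field_simp at this ⊢
    linarith
  have hM := lipSeminorm_mul_sub_le_of_generator hμ hS0 hμ0 hSbound hφCb hψ
    (fun s t hs ht => hsem s t hs ht φ hφCb) (hcont φ hφCb) hbdd hgen
    (by have := div_nonneg (sub_nonneg.2 hexp) hε0.le; linarith [one_div_pos.2 hε0]) hφC
    (by have := (hCf 0).trans' (norm_nonneg _); have := lipSeminorm_nonneg φ; positivity)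
    (dist_add_comp_div_le hε0 (dist_le_of_hasGradientAt hfgrad hCf) (lipSeminorm_nonneg φ)
      (dist_le_lipSeminorm_mul hφC) hηC)
  have hc : 0 < lam - ω - (exp (ε * K) - 1) / ε := by linarith
  calc ‖Dφ x‖ ≤ M := norm_le_lipSeminorm_of_hasGradientAt (hφgrad x) hφC
    _ ≤ (lam - ω - (exp (ε * K) - 1) / ε)⁻¹ * Cf := by
      rw [inv_mul_eq_div, le_div_iff₀ hc]
      linarith [show M * (lam - ω - (exp (ε * K) - 1) / ε)
        = M * (lam + 1 / ε - ω) - M * exp (ε * K) / ε by ring]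

/-- Under Hypothesis (i)–(iv), for `ε ∈ (0,1)`, `λ > ω + (e^{εK} - 1)/ε` and
`f ∈ C_b^1(H)`, the resolvent `φ_ε = R(λ, N_ε) f`, i.e. the solution in
`D(L) ∩ C_b^1(H)` of `λ φ_ε - L φ_ε - F_ε φ_ε = f`, satisfies the gradient
estimate `‖Dφ_ε‖₀ ≤ (λ - ω - (e^{εK} - 1)/ε)⁻¹ ‖Df‖₀`. -/
theorem resolvent_gradient_estimate
    {H : Type*} [NormedAddCommGroup H] [InnerProductSpace ℝ H] [CompleteSpace H]
    [SecondCountableTopology H] [MeasurableSpace H] [BorelSpace H]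
    -- Hypothesis (i): `S t = e^{tA}` a semigroup of type 𝒢(1, ω)
    (S : ℝ → H →L[ℝ] H) (ω : ℝ)
    (hS0 : S 0 = ContinuousLinearMap.id ℝ H)
    (hSsem : ∀ s t : ℝ, 0 ≤ s → 0 ≤ t → S (s + t) = (S s).comp (S t))
    (hSbound : ∀ t ≥ (0:ℝ), ‖S t‖ ≤ Real.exp (ω * t))
    -- Hypotheses (ii),(iii): `μ t = N_{Q_t}` Gaussian measures giving an OU semigroup
    (μ : ℝ → Measure H) (hμ : ∀ t, IsProbabilityMeasure (μ t))
    (hμ0 : μ 0 = Measure.dirac 0)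
    (hsem : ∀ s t : ℝ, 0 ≤ s → 0 ≤ t → ∀ φ : H → ℝ, IsCb φ → ∀ x,
      OUsg S μ (s + t) φ x = OUsg S μ s (fun z => OUsg S μ t φ z) x)
    (hcont : ∀ φ : H → ℝ, IsCb φ → ∀ x, ContinuousOn (fun t => OUsg S μ t φ x) (Ici 0))
    -- `(L, D(L))`: the weak (π-semigroup) generator of the OU semigroup
    (DL : Set (H → ℝ)) (L : (H → ℝ) → H → ℝ)
    (hDL : ∀ φ, φ ∈ DL ↔ (IsCb φ ∧ ∃ g, IsCb g ∧
      (∀ x, Tendsto (fun t => (OUsg S μ t φ x - φ x) / t) (𝓝[>] 0) (𝓝 (g x))) ∧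
      ∃ M, ∀ t ∈ Ioo (0:ℝ) 1, ∀ x, |(OUsg S μ t φ x - φ x) / t| ≤ M))
    (hLdef : ∀ φ ∈ DL, ∀ x,
      Tendsto (fun t => (OUsg S μ t φ x - φ x) / t) (𝓝[>] 0) (𝓝 (L φ x)))
    -- Hypothesis (iv): `F ∈ C_b^1(H;H)` with `K = sup ‖DF‖`
    (F : H → H) (MF : ℝ) (hMF : ∀ x, ‖F x‖ ≤ MF)
    (DF : H → H →L[ℝ] H) (hDF : ∀ x, HasFDerivAt F (DF x) x)
    (hDFuc : UniformContinuous DF) (K : ℝ) (hK : ∀ x, ‖DF x‖ ≤ K)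
    -- `η`: the flow of `η' = F ∘ η`
    (η : ℝ → H → H) (hη0 : ∀ x, η 0 x = x)
    (hη : ∀ (t : ℝ) (x : H), HasDerivAt (fun s => η s x) (F (η t x)) t)
    (ε : ℝ) (hε : ε ∈ Ioo (0:ℝ) 1)
    (lam : ℝ) (hlam : lam > ω + (Real.exp (ε * K) - 1) / ε)
    (f : H → ℝ) (Df : H → H) (hf : IsCb1 f Df)
    (φ : H → ℝ) (Dφ : H → H) (hφDL : φ ∈ DL) (hφ : IsCb1 φ Dφ)
    (hres : ∀ x, lam * φ x - L φ x - (φ (η ε x) - φ x) / ε = f x) :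
    ∀ Cf : ℝ, (∀ x, ‖Df x‖ ≤ Cf) →
      ∀ x, ‖Dφ x‖ ≤ (lam - ω - (Real.exp (ε * K) - 1) / ε)⁻¹ * Cf :=
  resolvent_gradient_estimate_general S ω hS0 hSbound μ hμ hμ0 hsem hcont DL L hDL hLdef F DF hDF K
    hK η hη0 hη ε hε lam hlam f Df hf φ Dφ hφDL hφ hres
end
end
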